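/- For every positive integer M, every j ∈ ℤ, every τ in the upper half-plane, and every z ∈ ℂ at which all theta values occurring in denominators below are nonzero: Ψ^{[M;0]}_{j,j}(τ, z, z, 0) / R^{R,−}(τ, z) = −q^{j²/M} e^{(4πi/M) j z} · [ϑ₀₀(Mτ, z + jτ) ϑ₀₁(Mτ, z + jτ) ϑ₁₀(Mτ, z + jτ) / ϑ₁₁(Mτ, z + jτ)] · [ϑ₁₁(τ, z) / (ϑ₀₀(τ, z) ϑ₀₁(τ, z) ϑ₁₀(τ, z))]. -/

import Mathlib

open Complex

/-- Jacobi theta function with characteristics `a b ∈ {0,1}` (allowing real characteristics):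
`ϑ_{ab}(τ, z) = Σ_{n ∈ ℤ} exp(πi(n + a/2)²τ + 2πi(n + a/2)(z + b/2))`. -/
noncomputable def jTheta (a b : ℝ) (τ z : ℂ) : ℂ :=
  ∑' n : ℤ, Complex.exp ((Real.pi : ℂ) * I * ((n : ℂ) + (a : ℂ) / 2) ^ 2 * τ +
    2 * (Real.pi : ℂ) * I * ((n : ℂ) + (a : ℂ) / 2) * (z + (b : ℂ) / 2))

/-- Dedekind eta function `η(τ) = e^{πiτ/12} Π_{n=1}^∞ (1 - q^n)`, `q = e^{2πiτ}`. -/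
noncomputable def dedekindEta (τ : ℂ) : ℂ :=
  Complex.exp ((Real.pi : ℂ) * I * τ / 12) *
    ∏' n : ℕ, (1 - Complex.exp (2 * (Real.pi : ℂ) * I * τ) ^ (n + 1))

/-- The function `Ψ^{[M;ε]}_{j,k}(τ, z₁, z₂, t)` (the paper's `Ψ^{[M,1,0;ε]}_{j,k;ε'}` in closed
form for `m = 1`):
`-i e^{-2πit/M} q^{jk/M} e^{(2πi/M)(k z₁ + j z₂)} η(Mτ)³ ϑ₁₁(Mτ, z₁+z₂+(j+k)τ) /
  (ϑ₁₁(Mτ, z₁+jτ+ε) ϑ₁₁(Mτ, z₂+kτ-ε))` where `q = e^{2πiτ}`. -/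
noncomputable def Psi (M : ℕ) (ε j k : ℝ) (τ z₁ z₂ t : ℂ) : ℂ :=
  -I * Complex.exp (-(2 * (Real.pi : ℂ) * I * t) / (M : ℂ)) *
    Complex.exp (2 * (Real.pi : ℂ) * I * τ * ((j : ℂ) * (k : ℂ) / (M : ℂ))) *
    Complex.exp (2 * (Real.pi : ℂ) * I / (M : ℂ) * ((k : ℂ) * z₁ + (j : ℂ) * z₂)) *
    (dedekindEta ((M : ℂ) * τ)) ^ 3 *
    jTheta 1 1 ((M : ℂ) * τ) (z₁ + z₂ + ((j : ℂ) + (k : ℂ)) * τ) /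
    (jTheta 1 1 ((M : ℂ) * τ) (z₁ + (j : ℂ) * τ + (ε : ℂ)) *
     jTheta 1 1 ((M : ℂ) * τ) (z₂ + (k : ℂ) * τ - (ε : ℂ)))

/-- The N=4 twisted (Ramond) super-denominator `R^{R,-}(τ,z) = i η(τ)³ ϑ₁₁(τ,2z) / ϑ₁₁(τ,z)²`. -/
noncomputable def RRminus (τ z : ℂ) : ℂ :=
  I * (dedekindEta τ) ^ 3 * jTheta 1 1 τ (2 * z) / (jTheta 1 1 τ z) ^ 2

/-!
The Ramond denominator `R^{R,-}(τ, z)` and `Ψ^{[M;0]}_{j,j}(τ, z, z, 0)` are both, up to elementary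
factors, of the form `η³ ϑ₁₁(2u) / ϑ₁₁(u)²` (at `(τ, z)` and at `(Mτ, z + jτ)`), so the theorem is
the quadruple product identity `η(τ)³ ϑ₁₁(τ, 2z) = ϑ₀₀ ϑ₀₁ ϑ₁₀ ϑ₁₁ (τ, z)` applied twice.

By the Jacobi triple product every `ϑ_{ab}` is an elementary factor times `(q;q)_∞` times
`(-Qv;q)_∞ (-Q/v;q)_∞`, where `Q = e^{πiτ}`, `q = Q²` and `v = e^{2πi(z + b/2 + aτ/2)}`; the
quadruple product identity then follows from `(a;q)_∞ (-a;q)_∞ = (a²;q²)_∞` and from splitting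
`(a;q)_∞` into its even and odd factors.

The triple product is the limit `N → ∞` of the finite identity
`(-Qw;q)_N (-Q/w;q)_N = ∑_{|i| ≤ N} [2N, N+i]_q Q^{i²} w^i`, a rescaled `q`-binomial theorem. The
Gaussian binomials are `(q;q)_{2N} / ((q;q)_{N+i} (q;q)_{N-i})`, hence uniformly bounded and
convergent to `1/(q;q)_∞`, so dominated convergence applies.
-/

open Finset Filter Topology

section QBinomial

variable {R : Type*} [CommRing R]

def qPochhammer (a q : R) (n : ℕ) : R := ∏ j ∈ range n, (1 - a * q ^ j)

@[simp] lemma qPochhammer_zero (a q : R) : qPochhammer a q 0 = 1 := prod_range_zero _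

lemma qPochhammer_succ (a q : R) (n : ℕ) :
    qPochhammer a q (n + 1) = qPochhammer a q n * (1 - a * q ^ n) :=
  prod_range_succ _ _

lemma qPochhammer_succ' (a q : R) (n : ℕ) :
    qPochhammer a q (n + 1) = (1 - a) * qPochhammer (a * q) q n := by
  rw [qPochhammer, prod_range_succ', pow_zero, mul_one, mul_comm]
  exact congrArg _ (prod_congr rfl fun j _ ↦ by ring)

def gaussBinom (q : R) : ℕ → ℕ → R
  | _, 0 => 1
  | 0, _ + 1 => 0
  | n + 1, k + 1 => gaussBinom q n (k + 1) + q ^ (n - k) * gaussBinom q n k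

@[simp] lemma gaussBinom_zero_right (q : R) (n : ℕ) : gaussBinom q n 0 = 1 := by
  cases n <;> rfl

lemma gaussBinom_succ_succ (q : R) (n k : ℕ) :
    gaussBinom q (n + 1) (k + 1) = gaussBinom q n (k + 1) + q ^ (n - k) * gaussBinom q n k :=
  rfl

lemma gaussBinom_eq_zero_of_lt (q : R) {n k : ℕ} (h : n < k) : gaussBinom q n k = 0 := by
  induction n generalizing k with
  | zero => obtain ⟨k, rfl⟩ := Nat.exists_eq_add_of_lt h; rfl
  | succ n ih =>
    obtain ⟨k, rfl⟩ := Nat.exists_eq_add_of_lt (Nat.zero_lt_of_lt h)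
    rw [gaussBinom_succ_succ, ih (by omega), ih (by omega), mul_zero, add_zero]

@[simp] lemma gaussBinom_self (q : R) (n : ℕ) : gaussBinom q n n = 1 := by
  induction n with
  | zero => rfl
  | succ n ih => simp [gaussBinom_succ_succ, gaussBinom_eq_zero_of_lt q n.lt_succ_self, ih]

theorem qPochhammer_neg_eq_sum_gaussBinom (x q : R) (n : ℕ) :
    qPochhammer (-x) q n = ∑ k ∈ range (n + 1), gaussBinom q n k * q ^ k.choose 2 * x ^ k := by
  induction n with
  | zero => simp
  | succ n ih =>
    have upper : ∑ k ∈ range (n + 1), gaussBinom q n (k + 1) * q ^ (k + 1).choose 2 * x ^ (k + 1)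
        = ∑ k ∈ range (n + 1), gaussBinom q n k * q ^ k.choose 2 * x ^ k - 1 := by
      rw [sum_range_succ, gaussBinom_eq_zero_of_lt q n.lt_succ_self, sum_range_succ' _ n]
      simp
    have lower : ∑ k ∈ range (n + 1),
        q ^ (n - k) * gaussBinom q n k * q ^ (k + 1).choose 2 * x ^ (k + 1) =
        (∑ k ∈ range (n + 1), gaussBinom q n k * q ^ k.choose 2 * x ^ k) * (x * q ^ n) := by
      rw [sum_mul]
      refine sum_congr rfl fun k hk ↦ ?_
      obtain ⟨m, rfl⟩ := Nat.exists_eq_add_of_le (Nat.lt_succ_iff.mp (mem_range.mp hk))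
      rw [Nat.choose_succ_succ', Nat.choose_one_right, Nat.add_sub_cancel_left]
      ring
    rw [qPochhammer_succ, ih, sum_range_succ' _ (n + 1)]
    simp only [gaussBinom_succ_succ, add_mul, sum_add_distrib, upper, lower]
    simp only [neg_mul, sub_neg_eq_add, gaussBinom_zero_right, Nat.choose_zero_succ, pow_zero, mul_one]
    ring

theorem gaussBinom_mul_qPochhammer (q : R) {n k : ℕ} (h : k ≤ n) :
    gaussBinom q n k * qPochhammer q q k * qPochhammer q q (n - k) = qPochhammer q q n := by
  induction n generalizing k with
  | zero => obtain rfl := Nat.le_zero.mp h; simp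
  | succ n ih =>
    rcases k with _ | k
    · simp
    rcases Nat.lt_or_eq_of_le h with h | h
    · obtain ⟨m, rfl⟩ := Nat.exists_eq_add_of_lt (Nat.lt_of_succ_lt_succ h)
      have ih₁ := ih (k := k + 1) (by omega)
      have ih₂ := ih (k := k) (by omega)
      rw [show k + m + 1 - (k + 1) = m by omega] at ih₁
      rw [show k + m + 1 - k = m + 1 by omega] at ih₂
      rw [show k + m + 1 + 1 - (k + 1) = m + 1 by omega, gaussBinom_succ_succ,
        show k + m + 1 - k = m + 1 by omega]
      linear_combination (gaussBinom q (k + m + 1) (k + 1) * qPochhammer q q (k + 1)) *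
          qPochhammer_succ q q m +
        (q ^ (m + 1) * gaussBinom q (k + m + 1) k * qPochhammer q q (m + 1)) *
          qPochhammer_succ q q k +
        (1 - q ^ (m + 1)) * ih₁ + q ^ (m + 1) * (1 - q ^ (k + 1)) * ih₂ -
        qPochhammer_succ q q (k + m + 1)
    · obtain rfl : k = n := by omega
      simp

lemma two_mul_choose_two_add_self (k : ℕ) : 2 * k.choose 2 + k = k ^ 2 := by
  have h : (2 * k.choose 2 + k : ℚ) = k ^ 2 := by rw [Nat.cast_choose_two]; ring
  exact_mod_cast h

variable {K : Type*} [Field K]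

lemma qPochhammer_mul_qPochhammer_inv_mul_pow (Q w : K) (hQ : Q ≠ 0) (hw : w ≠ 0) (N : ℕ) :
    qPochhammer (-(Q * w)) (Q ^ 2) N * qPochhammer (-(Q * w⁻¹)) (Q ^ 2) N * w ^ N =
      Q ^ (N ^ 2) * qPochhammer (-(Q * w / Q ^ (2 * N))) (Q ^ 2) (2 * N) := by
  induction N with
  | zero => simp
  | succ N ih =>
    -- the right side gains the factors `1 + Q^{-2N-1} w` in front and `1 + Q^{2N+1} w` at the end
    have shift : -(Q * w / Q ^ (2 * (N + 1))) * Q ^ 2 = -(Q * w / Q ^ (2 * N)) := by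
      field_simp; ring
    have peel : qPochhammer (-(Q * w / Q ^ (2 * (N + 1)))) (Q ^ 2) (2 * (N + 1)) =
        (1 + Q * w / Q ^ (2 * (N + 1))) * qPochhammer (-(Q * w / Q ^ (2 * N))) (Q ^ 2) (2 * N) *
          (1 + Q * w / Q ^ (2 * N) * (Q ^ 2) ^ (2 * N)) := by
      rw [show 2 * (N + 1) = 2 * N + 1 + 1 by ring, qPochhammer_succ',
        ← show 2 * (N + 1) = 2 * N + 1 + 1 by ring, shift, qPochhammer_succ]
      ring
    have outer : Q ^ ((N + 1) ^ 2) * (1 + Q * w / Q ^ (2 * (N + 1))) *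
        (1 + Q * w / Q ^ (2 * N) * (Q ^ 2) ^ (2 * N)) =
        Q ^ (N ^ 2) * ((1 - -(Q * w) * (Q ^ 2) ^ N) * (1 - -(Q * w⁻¹) * (Q ^ 2) ^ N) * w) := by
      field_simp
      ring
    rw [peel, qPochhammer_succ, qPochhammer_succ]
    linear_combination
      ((1 - -(Q * w) * (Q ^ 2) ^ N) * (1 - -(Q * w⁻¹) * (Q ^ 2) ^ N) * w) * ih -
        qPochhammer (-(Q * w / Q ^ (2 * N))) (Q ^ 2) (2 * N) * outer

theorem qPochhammer_mul_qPochhammer_inv_eq_sum (Q w : K) (hQ : Q ≠ 0) (hw : w ≠ 0) (N : ℕ) :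
    qPochhammer (-(Q * w)) (Q ^ 2) N * qPochhammer (-(Q * w⁻¹)) (Q ^ 2) N =
      ∑ i ∈ Icc (-N : ℤ) N, gaussBinom (Q ^ 2) (2 * N) (i + N).toNat * Q ^ (i ^ 2) * w ^ i := by
  rw [← mul_div_cancel_right₀ (_ * _) (pow_ne_zero N hw),
    qPochhammer_mul_qPochhammer_inv_mul_pow Q w hQ hw, qPochhammer_neg_eq_sum_gaussBinom,
    mul_sum, sum_div]
  refine sum_nbij' (fun k : ℕ ↦ (k : ℤ) - N) (fun i ↦ (i + N).toNat) ?_ ?_ ?_ ?_ ?_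
  · intro k hk; simp only [mem_range, mem_Icc] at hk ⊢; omega
  · intro i hi; simp only [mem_range, mem_Icc] at hi ⊢; omega
  · intro k _; simp
  · intro i hi; simp only [mem_Icc] at hi; omega
  · intro k _
    have hexp : ((k : ℤ) - N) ^ 2 = ((k ^ 2 + N ^ 2 : ℕ) : ℤ) - ((2 * N * k : ℕ) : ℤ) := by
      push_cast; ring
    rw [sub_add_cancel, Int.toNat_natCast, hexp, zpow_sub₀ hQ, zpow_sub₀ hw, zpow_natCast,
      zpow_natCast, zpow_natCast, zpow_natCast, div_pow, mul_pow, ← pow_mul, ← pow_mul,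
      ← two_mul_choose_two_add_self k, pow_add, pow_add, pow_mul]
    field_simp

end QBinomial

noncomputable def qPochhammerInf {R : Type*} [CommRing R] [TopologicalSpace R] (a q : R) : R :=
  ∏' n, (1 - a * q ^ n)

section QPochhammerInf

variable {K : Type*} [NormedField K] {q : K}

lemma norm_sq_lt_one (hq : ‖q‖ < 1) : ‖q ^ 2‖ < 1 := by
  rw [norm_pow]
  exact pow_lt_one₀ (norm_nonneg q) hq two_ne_zero

lemma one_sub_mul_pow_ne_zero (hq : ‖q‖ < 1) (n : ℕ) : 1 - q * q ^ n ≠ 0 := by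
  rw [← pow_succ', sub_ne_zero, ne_comm]
  exact fun h ↦ (pow_lt_one₀ (norm_nonneg q) hq n.succ_ne_zero).ne (by rw [← norm_pow, h, norm_one])

lemma qPochhammer_self_ne_zero (hq : ‖q‖ < 1) (n : ℕ) : qPochhammer q q n ≠ 0 :=
  prod_ne_zero_iff.mpr fun j _ ↦ one_sub_mul_pow_ne_zero hq j

lemma gaussBinom_eq_mul_inv (hq : ‖q‖ < 1) {n k : ℕ} (h : k ≤ n) :
    gaussBinom q n k =
      qPochhammer q q n * (qPochhammer q q k)⁻¹ * (qPochhammer q q (n - k))⁻¹ := by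
  rw [← gaussBinom_mul_qPochhammer q h]
  field_simp [qPochhammer_self_ne_zero hq]

lemma summable_norm_mul_pow (a : K) (hq : ‖q‖ < 1) : Summable fun n ↦ ‖a * q ^ n‖ := by
  simpa [norm_pow] using (summable_geometric_of_lt_one (norm_nonneg q) hq).mul_left ‖a‖

variable [CompleteSpace K]

lemma multipliable_one_sub_mul_pow (a : K) (hq : ‖q‖ < 1) :
    Multipliable fun n ↦ 1 - a * q ^ n := by
  have hsum : Summable fun n ↦ ‖-(a * q ^ n)‖ := by simpa using summable_norm_mul_pow a hq
  simpa [sub_eq_add_neg] using multipliable_one_add_of_summable hsum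

lemma tendsto_qPochhammer (a : K) (hq : ‖q‖ < 1) :
    Tendsto (qPochhammer a q) atTop (𝓝 (qPochhammerInf a q)) :=
  (multipliable_one_sub_mul_pow a hq).hasProd.tendsto_prod_nat

lemma qPochhammerInf_self_ne_zero (hq : ‖q‖ < 1) : qPochhammerInf q q ≠ 0 := by
  have hsum : Summable fun n ↦ ‖-(q * q ^ n)‖ := by simpa using summable_norm_mul_pow q hq
  simpa [qPochhammerInf, sub_eq_add_neg] using tprod_one_add_ne_zero_of_summable
    (fun n ↦ by simpa [sub_eq_add_neg] using one_sub_mul_pow_ne_zero hq n) hsum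

lemma exists_norm_gaussBinom_le (hq : ‖q‖ < 1) : ∃ C, ∀ n k, ‖gaussBinom q n k‖ ≤ C := by
  have hP := tendsto_qPochhammer q hq
  obtain ⟨A, hA⟩ := isBounded_iff_forall_norm_le.mp (Metric.isBounded_range_of_tendsto _ hP)
  obtain ⟨B, hB⟩ := isBounded_iff_forall_norm_le.mp
    (Metric.isBounded_range_of_tendsto _ (hP.inv₀ (qPochhammerInf_self_ne_zero hq)))
  have hA' (m : ℕ) : ‖qPochhammer q q m‖ ≤ A := hA _ ⟨m, rfl⟩
  have hB' (m : ℕ) : ‖(qPochhammer q q m)⁻¹‖ ≤ B := hB _ ⟨m, rfl⟩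
  have hA0 : 0 ≤ A := (norm_nonneg _).trans (hA' 0)
  have hB0 : 0 ≤ B := (norm_nonneg _).trans (hB' 0)
  refine ⟨A * B * B, fun n k ↦ ?_⟩
  rcases le_or_gt k n with h | h
  · rw [gaussBinom_eq_mul_inv hq h, norm_mul, norm_mul]
    exact mul_le_mul (mul_le_mul (hA' n) (hB' k) (norm_nonneg _) hA0) (hB' (n - k))
      (norm_nonneg _) (mul_nonneg hA0 hB0)
  · rw [gaussBinom_eq_zero_of_lt q h, norm_zero]
    positivity

lemma tendsto_gaussBinom (hq : ‖q‖ < 1) {ι : Type*} {l : Filter ι} {a b : ι → ℕ}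
    (ha : Tendsto a l atTop) (hb : Tendsto b l atTop) :
    Tendsto (fun i ↦ gaussBinom q (a i + b i) (a i)) l (𝓝 (qPochhammerInf q q)⁻¹) := by
  have hP := tendsto_qPochhammer q hq
  have hE := qPochhammerInf_self_ne_zero hq
  have hab : Tendsto (fun i ↦ a i + b i) l atTop :=
    tendsto_atTop_mono (fun i ↦ Nat.le_add_right (a i) (b i)) ha
  have hlim := ((hP.comp hab).mul ((hP.comp ha).inv₀ hE)).mul ((hP.comp hb).inv₀ hE)
  rw [mul_inv_cancel₀ hE, one_mul] at hlim
  refine hlim.congr fun i ↦ ?_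
  simp [gaussBinom_eq_mul_inv hq (Nat.le_add_right (a i) (b i))]

lemma qPochhammerInf_mul_neg (a : K) (hq : ‖q‖ < 1) :
    qPochhammerInf a q * qPochhammerInf (-a) q = qPochhammerInf (a ^ 2) (q ^ 2) := by
  rw [qPochhammerInf, qPochhammerInf, ← (multipliable_one_sub_mul_pow a hq).tprod_mul
    (multipliable_one_sub_mul_pow (-a) hq)]
  exact tprod_congr fun n ↦ by ring

lemma qPochhammerInf_even_mul_odd (a : K) (hq : ‖q‖ < 1) :
    qPochhammerInf a (q ^ 2) * qPochhammerInf (a * q) (q ^ 2) = qPochhammerInf a q := by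
  symm
  rw [qPochhammerInf, ← tprod_even_mul_odd]
  · exact congrArg₂ _ (tprod_congr fun n ↦ by ring) (tprod_congr fun n ↦ by ring)
  · exact (multipliable_one_sub_mul_pow a (norm_sq_lt_one hq)).congr fun n ↦ by ring
  · exact (multipliable_one_sub_mul_pow (a * q) (norm_sq_lt_one hq)).congr fun n ↦ by ring

noncomputable def thetaProd (Q v : K) : K :=
  qPochhammerInf (-(Q * v)) (Q ^ 2) * qPochhammerInf (-(Q * v⁻¹)) (Q ^ 2)

lemma thetaProd_mul_thetaProd_neg {Q : K} (hQ : ‖Q‖ < 1) (v : K) :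
    thetaProd Q v * thetaProd Q (-v) =
      qPochhammerInf (Q ^ 2 * v ^ 2) ((Q ^ 2) ^ 2) *
        qPochhammerInf (Q ^ 2 * (v ^ 2)⁻¹) ((Q ^ 2) ^ 2) := by
  have h₁ := qPochhammerInf_mul_neg (-(Q * v)) (norm_sq_lt_one hQ)
  have h₂ := qPochhammerInf_mul_neg (-(Q * v⁻¹)) (norm_sq_lt_one hQ)
  simp only [neg_neg, neg_sq, mul_pow, inv_pow] at h₁ h₂
  simp only [thetaProd, mul_neg, inv_neg, neg_neg]
  linear_combination
    h₁ * qPochhammerInf (-(Q * v⁻¹)) (Q ^ 2) * qPochhammerInf (Q * v⁻¹) (Q ^ 2) +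
      qPochhammerInf (Q ^ 2 * v ^ 2) ((Q ^ 2) ^ 2) * h₂

lemma thetaProd_neg_mul_sq {Q : K} (hQ : ‖Q‖ < 1) (hQ0 : Q ≠ 0) (w : K) :
    thetaProd Q (-(Q * w ^ 2)) =
      thetaProd Q w * thetaProd Q (-w) * (thetaProd Q (Q * w) * thetaProd Q (-(Q * w))) := by
  have even_odd₁ := qPochhammerInf_even_mul_odd (Q ^ 2 * w ^ 2) (norm_sq_lt_one hQ)
  have even_odd₂ := qPochhammerInf_even_mul_odd (w ^ 2)⁻¹ (norm_sq_lt_one hQ)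
  have pair : thetaProd Q (Q * w) * thetaProd Q (-(Q * w)) =
      qPochhammerInf (Q ^ 2 * w ^ 2 * Q ^ 2) ((Q ^ 2) ^ 2) *
        qPochhammerInf (w ^ 2)⁻¹ ((Q ^ 2) ^ 2) := by
    rw [thetaProd_mul_thetaProd_neg hQ, show Q ^ 2 * (Q * w) ^ 2 = Q ^ 2 * w ^ 2 * Q ^ 2 by ring,
      show Q ^ 2 * ((Q * w) ^ 2)⁻¹ = (w ^ 2)⁻¹ by field_simp]
  rw [thetaProd_mul_thetaProd_neg hQ, pair, thetaProd,
    show -(Q * -(Q * w ^ 2)) = Q ^ 2 * w ^ 2 by ring,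
    show -(Q * (-(Q * w ^ 2))⁻¹) = (w ^ 2)⁻¹ by field_simp, ← even_odd₁, ← even_odd₂]
  ring_nf

end QPochhammerInf

open Real

lemma norm_cexp_pi_mul_I_lt_one {τ : ℂ} (hτ : 0 < τ.im) : ‖cexp (π * I * τ)‖ < 1 := by
  rw [Complex.norm_exp, Real.exp_lt_one_iff]
  simpa using mul_pos pi_pos hτ

lemma jacobiTheta₂_term_eq_zpow (n : ℤ) (z τ : ℂ) :
    jacobiTheta₂_term n z τ = cexp (π * I * τ) ^ (n ^ 2) * cexp (2 * π * I * z) ^ n := by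
  rw [jacobiTheta₂_term, ← Complex.exp_int_mul, ← Complex.exp_int_mul, ← Complex.exp_add]
  push_cast
  ring_nf

theorem tendsto_qPochhammer_mul_qPochhammer_inv {τ : ℂ} (hτ : 0 < τ.im) (z : ℂ) :
    Tendsto (fun N ↦
      qPochhammer (-(cexp (π * I * τ) * cexp (2 * π * I * z))) (cexp (π * I * τ) ^ 2) N *
        qPochhammer (-(cexp (π * I * τ) * (cexp (2 * π * I * z))⁻¹)) (cexp (π * I * τ) ^ 2) N)
      atTop (𝓝 ((qPochhammerInf (cexp (π * I * τ) ^ 2) (cexp (π * I * τ) ^ 2))⁻¹ *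
        jacobiTheta₂ z τ)) := by
  set Q := cexp (π * I * τ)
  set w := cexp (2 * π * I * z)
  have hq : ‖Q ^ 2‖ < 1 := norm_sq_lt_one (norm_cexp_pi_mul_I_lt_one hτ)
  obtain ⟨C, hC⟩ := exists_norm_gaussBinom_le hq
  let g (N : ℕ) : ℤ → ℂ := (Icc (-N : ℤ) N : Set ℤ).indicator
    fun i ↦ gaussBinom (Q ^ 2) (2 * N) (i + N).toNat * Q ^ (i ^ 2) * w ^ i
  have hfinite (N : ℕ) : qPochhammer (-(Q * w)) (Q ^ 2) N * qPochhammer (-(Q * w⁻¹)) (Q ^ 2) N =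
      ∑' i, g N i := by
    rw [qPochhammer_mul_qPochhammer_inv_eq_sum Q w (Complex.exp_ne_zero _)
      (Complex.exp_ne_zero _), sum_eq_tsum_indicator]
  have hcoeff (i : ℤ) : Tendsto (g · i) atTop
      (𝓝 ((qPochhammerInf (Q ^ 2) (Q ^ 2))⁻¹ * (Q ^ (i ^ 2) * w ^ i))) := by
    have ha : Tendsto (fun N : ℕ ↦ (i + N).toNat) atTop atTop :=
      tendsto_atTop_atTop.mpr fun b ↦ ⟨b + i.natAbs, fun N hN ↦ by omega⟩
    have hb : Tendsto (fun N : ℕ ↦ (N - i).toNat) atTop atTop :=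
      tendsto_atTop_atTop.mpr fun b ↦ ⟨b + i.natAbs, fun N hN ↦ by omega⟩
    refine ((tendsto_gaussBinom hq ha hb).mul_const _).congr' ?_
    dsimp only [g]
    filter_upwards [eventually_ge_atTop i.natAbs] with N hN
    rw [Set.indicator_of_mem (by simp only [coe_Icc, Set.mem_Icc]; omega),
      show (i + N).toNat + (N - i).toNat = 2 * N by omega, mul_assoc]
  have hbound (N : ℕ) (i : ℤ) : ‖g N i‖ ≤ C * ‖Q ^ (i ^ 2) * w ^ i‖ := by
    dsimp only [g]
    by_cases hi : i ∈ (Icc (-N : ℤ) N : Set ℤ)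
    · rw [Set.indicator_of_mem hi, mul_assoc, norm_mul]
      exact mul_le_mul_of_nonneg_right (hC _ _) (norm_nonneg _)
    · rw [Set.indicator_of_notMem hi, norm_zero]
      exact mul_nonneg ((norm_nonneg _).trans (hC 0 0)) (norm_nonneg _)
  have hsummable : Summable fun i : ℤ ↦ C * ‖Q ^ (i ^ 2) * w ^ i‖ := by
    refine (summable_norm_iff.mpr ?_).mul_left C
    simpa [jacobiTheta₂_term_eq_zpow] using (summable_jacobiTheta₂_term_iff z τ).mpr hτ
  rw [funext hfinite, jacobiTheta₂, funext fun n ↦ jacobiTheta₂_term_eq_zpow n z τ,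
    ← tsum_mul_left]
  exact tendsto_tsum_of_dominated_convergence hsummable hcoeff (Eventually.of_forall hbound)

theorem jacobiTheta₂_eq_mul_thetaProd {τ : ℂ} (hτ : 0 < τ.im) (z : ℂ) :
    jacobiTheta₂ z τ = qPochhammerInf (cexp (π * I * τ) ^ 2) (cexp (π * I * τ) ^ 2) *
      thetaProd (cexp (π * I * τ)) (cexp (2 * π * I * z)) := by
  have hq := norm_sq_lt_one (norm_cexp_pi_mul_I_lt_one hτ)
  have hprod := (tendsto_qPochhammer (-(cexp (π * I * τ) * cexp (2 * π * I * z))) hq).mul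
    (tendsto_qPochhammer (-(cexp (π * I * τ) * (cexp (2 * π * I * z))⁻¹)) hq)
  rw [thetaProd, ← tendsto_nhds_unique (tendsto_qPochhammer_mul_qPochhammer_inv hτ z) hprod,
    mul_inv_cancel_left₀ (qPochhammerInf_self_ne_zero hq)]

lemma jTheta_eq_mul_jacobiTheta₂ (a b : ℝ) (τ z : ℂ) :
    jTheta a b τ z = cexp (π * I * a ^ 2 / 4 * τ + π * I * a * (z + b / 2)) *
      jacobiTheta₂ (z + b / 2 + a * τ / 2) τ := by
  rw [jTheta, jacobiTheta₂, ← tsum_mul_left]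
  refine tsum_congr fun n ↦ ?_
  rw [jacobiTheta₂_term, ← Complex.exp_add]
  ring_nf

lemma dedekindEta_eq_mul_qPochhammerInf (τ : ℂ) :
    dedekindEta τ = cexp (π * I * τ / 12) *
      qPochhammerInf (cexp (π * I * τ) ^ 2) (cexp (π * I * τ) ^ 2) := by
  rw [dedekindEta, qPochhammerInf]
  congr 1
  refine tprod_congr fun n ↦ ?_
  rw [← pow_succ', ← pow_mul, ← Complex.exp_nat_mul, ← Complex.exp_nat_mul]
  push_cast
  ring_nf

lemma cexp_two_pi_I_mul_add_half_mul (u τ : ℂ) :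
    cexp (2 * π * I * (u + τ / 2)) = cexp (π * I * τ) * cexp (2 * π * I * u) := by
  rw [← Complex.exp_add]
  ring_nf

theorem dedekindEta_pow_three_mul_jTheta_two_mul {τ : ℂ} (hτ : 0 < τ.im) (z : ℂ) :
    dedekindEta τ ^ 3 * jTheta 1 1 τ (2 * z) =
      jTheta 0 0 τ z * jTheta 0 1 τ z * jTheta 1 0 τ z * jTheta 1 1 τ z := by
  have hsq : cexp (2 * π * I * (2 * z)) = cexp (2 * π * I * z) ^ 2 := by
    rw [← Complex.exp_nat_mul]
    ring_nf
  have hprefactor : cexp (π * I * τ / 12) ^ 3 * cexp (π * I / 4 * τ + π * I * (2 * z + 1 / 2)) =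
      cexp (π * I / 4 * τ + π * I * z) * cexp (π * I / 4 * τ + π * I * (z + 1 / 2)) := by
    rw [← Complex.exp_nat_mul, ← Complex.exp_add, ← Complex.exp_add]
    ring_nf
  -- `cexp_two_pi_I_mul_add_half_mul` with `τ = 1` also performs the half-period shift `z + 1/2`
  simp only [dedekindEta_eq_mul_qPochhammerInf, jTheta_eq_mul_jacobiTheta₂,
    jacobiTheta₂_eq_mul_thetaProd hτ, ofReal_zero, ofReal_one, zero_mul, zero_div, add_zero,
    one_mul, one_pow, mul_one, mul_zero, ne_eq, OfNat.ofNat_ne_zero, not_false_eq_true, zero_pow,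
    Complex.exp_zero, cexp_two_pi_I_mul_add_half_mul, exp_pi_mul_I, hsq, neg_one_mul, mul_neg]
  rw [thetaProd_neg_mul_sq (norm_cexp_pi_mul_I_lt_one hτ) (Complex.exp_ne_zero _)]
  set E := qPochhammerInf (cexp (π * I * τ) ^ 2) (cexp (π * I * τ) ^ 2)
  set Q := cexp (π * I * τ)
  set w := cexp (2 * π * I * z)
  linear_combination E ^ 4 * thetaProd Q w * thetaProd Q (-w) *
    (thetaProd Q (Q * w) * thetaProd Q (-(Q * w))) * hprefactor

theorem Psi_div_RRminus_general (M : ℕ) (hM : 0 < M) (j : ℝ)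
    (τ : ℂ) (hτ : 0 < τ.im) (z : ℂ)
    (h1 : jTheta 1 1 ((M : ℂ) * τ) (z + (j : ℂ) * τ) ≠ 0) :
    Psi M 0 j j τ z z 0 / RRminus τ z =
      -(Complex.exp (2 * (Real.pi : ℂ) * I * τ * ((j : ℂ) ^ 2 / (M : ℂ))) *
        Complex.exp (4 * (Real.pi : ℂ) * I / (M : ℂ) * (j : ℂ) * z) *
        (jTheta 0 0 ((M : ℂ) * τ) (z + (j : ℂ) * τ) *
         jTheta 0 1 ((M : ℂ) * τ) (z + (j : ℂ) * τ) *
         jTheta 1 0 ((M : ℂ) * τ) (z + (j : ℂ) * τ) /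
         jTheta 1 1 ((M : ℂ) * τ) (z + (j : ℂ) * τ)) *
        (jTheta 1 1 τ z / (jTheta 0 0 τ z * jTheta 0 1 τ z * jTheta 1 0 τ z))) := by
  have hMτ : 0 < ((M : ℂ) * τ).im := by simpa using mul_pos (Nat.cast_pos.mpr hM) hτ
  have hnum := dedekindEta_pow_three_mul_jTheta_two_mul hMτ (z + j * τ)
  have hden := dedekindEta_pow_three_mul_jTheta_two_mul hτ z
  rw [Psi, RRminus, show z + z + ((j : ℂ) + j) * τ = 2 * (z + j * τ) by ring]
  simp only [ofReal_zero, add_zero, sub_zero, mul_zero, neg_zero, zero_div, Complex.exp_zero,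
    mul_one]
  rw [mul_assoc _ (dedekindEta _ ^ 3), hnum, mul_assoc I, hden, ← mul_assoc _ _ (jTheta 1 1 _ _),
    mul_div_mul_right _ _ h1]
  field_simp
  ring_nf

/-- Lemma 9.2, 2)(ii) of the paper: the Ramond super-character quotient. -/
theorem Psi_div_RRminus (M : ℕ) (hM : 0 < M) (j : ℝ) (hj : ∃ n : ℤ, j = n)
    (τ : ℂ) (hτ : 0 < τ.im) (z : ℂ)
    (h1 : jTheta 1 1 ((M : ℂ) * τ) (z + (j : ℂ) * τ) ≠ 0)
    (h2 : jTheta 0 0 τ z ≠ 0) (h3 : jTheta 0 1 τ z ≠ 0)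
    (h4 : jTheta 1 0 τ z ≠ 0) (h5 : jTheta 1 1 τ z ≠ 0)
    (h6 : jTheta 1 1 τ (2 * z) ≠ 0) :
    Psi M 0 j j τ z z 0 / RRminus τ z =
      -(Complex.exp (2 * (Real.pi : ℂ) * I * τ * ((j : ℂ) ^ 2 / (M : ℂ))) *
        Complex.exp (4 * (Real.pi : ℂ) * I / (M : ℂ) * (j : ℂ) * z) *
        (jTheta 0 0 ((M : ℂ) * τ) (z + (j : ℂ) * τ) *
         jTheta 0 1 ((M : ℂ) * τ) (z + (j : ℂ) * τ) *
         jTheta 1 0 ((M : ℂ) * τ) (z + (j : ℂ) * τ) /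
         jTheta 1 1 ((M : ℂ) * τ) (z + (j : ℂ) * τ)) *
        (jTheta 1 1 τ z / (jTheta 0 0 τ z * jTheta 0 1 τ z * jTheta 1 0 τ z))) :=
  Psi_div_RRminus_general M hM j τ hτ z h1
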